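/- Let X be a random variable with distribution P_X on a finite set 𝒳, let F be a random predicate on 𝒳 independent of X, and let {ρ_x}_{x∈𝒳} be a family of density matrices on ℂ^d. For x, x' ∈ 𝒳 set λ_{x,x'} := 2·Pr_{f←P_F}[f(x) = f(x')] − 1. Then d(F(X)|⟨ρ_X,F⟩) ≤ (1/2)·√d · √( Σ_{x,x'∈𝒳} P_X(x)·P_X(x')·λ_{x,x'}·tr(ρ_x ρ_{x'}) ). -/

import Mathlib

/-!
Fix a predicate `f`. For a POVM `{E_w}`, the outcome `w` leaves `f(X)` at distance at most
`½ |tr(E_w Λ_f)|` from uniform, where `Λ_f = ∑ₓ P_X(x) (±1) ρₓ` carries the sign `+1` where `f`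
holds (`signedEnsemble`). Diagonalising the Hermitian `Λ_f`, `∑_w |tr(E_w Λ_f)| ≤ ∑ᵢ |λᵢ|`, which
is at most `√d · √tr(Λ_f²)` by Cauchy–Schwarz, uniformly in the POVM. Averaging over `f`,
concavity of `√` pulls the square root out of the expectation, and `E_f tr(Λ_f²)` expands to the
right-hand side because `E_f [±1 · ±1] = 2 Pr[f x = f x'] - 1`.
-/

open Finset ComplexOrder

/-- The distance of a distribution `P` on a finite set `Z` from the uniform
distribution: `d(P) = (1/2) ∑_z |P z - 1/|Z||`. -/
noncomputable def distUnif {Z : Type*} [Fintype Z] (P : Z → ℝ) : ℝ :=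
  (1 / 2) * ∑ z, |P z - 1 / (Fintype.card Z : ℝ)|

/-- For a joint distribution `P` on `W × Z` (given as `P : W → Z → ℝ`), the expected
distance of `Z` from uniform given `W`: `d(Z|W) = ∑_w P_W(w) · d(P_{Z|W=w})`. -/
noncomputable def dCond {W Z : Type*} [Fintype W] [Fintype Z] (P : W → Z → ℝ) : ℝ :=
  ∑ w, (∑ z, P w z) * distUnif (fun z => P w z / ∑ z', P w z')

/-- A POVM on `ℂ^d` with an arbitrary finite outcome set: a family `{E_w}` of positive
semidefinite `d×d` complex matrices summing to the identity. -/
structure POVM (d : ℕ) where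
  ι : Type
  [fin : Fintype ι]
  E : ι → Matrix (Fin d) (Fin d) ℂ
  psd : ∀ w, (E w).PosSemidef
  sum_eq : ∑ w, E w = 1

attribute [instance] POVM.fin

/-- Given `X` with distribution `PX` on `𝒳`, a family `{ρ_x}` of density matrices on
`ℂ^d`, and a function `g : 𝒳 → 𝒵`, the distance of `g(X)` from uniform given `ρ_X`:
the supremum over all POVMs `{E_w}` (with arbitrary finite outcome sets) of
`d(g(X)|W)`, where `W` is the measurement outcome, with joint distribution
`P_{X W}(x,w) = PX x · tr(E_w ρ_x)`. -/
noncomputable def dQuant {d : ℕ} {𝒳 𝒵 : Type} [Fintype 𝒳] [Fintype 𝒵] [DecidableEq 𝒵]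
    (PX : 𝒳 → ℝ) (ρ : 𝒳 → Matrix (Fin d) (Fin d) ℂ) (g : 𝒳 → 𝒵) : ℝ :=
  sSup {r : ℝ | ∃ M : POVM d,
    r = dCond (fun (w : M.ι) (z : 𝒵) =>
      ∑ x ∈ univ.filter (fun x => g x = z), PX x * ((M.E w) * ρ x).trace.re)}

namespace Matrix

variable {n : Type*} [Fintype n] [DecidableEq n]

theorem IsHermitian.trace_mul_eq_sum_diag_mul_eigenvalues {A B : Matrix n n ℂ}
    (hB : B.IsHermitian) :
    (A * B).trace = ∑ i, Unitary.conjStarAlgAut ℂ _ (star hB.eigenvectorUnitary) A i i *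
      hB.eigenvalues i := by
  conv_lhs => rw [hB.spectral_theorem, Unitary.conjStarAlgAut_apply]
  rw [Unitary.conjStarAlgAut_star_apply, ← Matrix.mul_assoc, ← Matrix.mul_assoc, trace_mul_cycle,
    ← Matrix.mul_assoc]
  simp [trace, mul_diagonal]

theorem IsHermitian.re_trace_mul_self {A : Matrix n n ℂ} (hA : A.IsHermitian) :
    (A * A).trace.re = ∑ i, hA.eigenvalues i ^ 2 := by
  simp [hA.trace_mul_eq_sum_diag_mul_eigenvalues, hA.conjStarAlgAut_star_eigenvectorUnitary,
    Complex.re_sum, sq]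

theorem PosSemidef.conjStarAlgAut {A : Matrix n n ℂ} (hA : A.PosSemidef)
    (U : unitary (Matrix n n ℂ)) : (Unitary.conjStarAlgAut ℂ _ U A).PosSemidef := by
  simpa [Matrix.star_eq_conjTranspose] using hA.mul_mul_conjTranspose_same (U : Matrix n n ℂ)

variable {ι : Type*} [Fintype ι] {E : ι → Matrix n n ℂ}

/- In the eigenbasis of `A`, the diagonals of the `E w` form a stochastic matrix, so
`tr (E w * A)` are weighted sums of eigenvalues whose weights add up to one across `w`. -/
theorem sum_abs_re_trace_mul_le_sum_abs_eigenvalues (hE : ∀ w, (E w).PosSemidef)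
    (hE1 : ∑ w, E w = 1) {A : Matrix n n ℂ} (hA : A.IsHermitian) :
    ∑ w, |(E w * A).trace.re| ≤ ∑ i, |hA.eigenvalues i| := by
  set F := fun w => Unitary.conjStarAlgAut ℂ _ (star hA.eigenvectorUnitary) (E w)
  have hF : ∀ w i, 0 ≤ (F w i i).re := fun w i =>
    (Complex.nonneg_iff.mp ((hE w).conjStarAlgAut _).diag_nonneg).1
  have hF1 : ∀ i, ∑ w, (F w i i).re = 1 := by
    intro i
    rw [← Complex.re_sum, ← Matrix.sum_apply, ← map_sum, hE1, map_one, one_apply_eq,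
      Complex.one_re]
  calc ∑ w, |(E w * A).trace.re|
      = ∑ w, |∑ i, (F w i i).re * hA.eigenvalues i| := by
        simp [hA.trace_mul_eq_sum_diag_mul_eigenvalues, F, Complex.re_sum]
    _ ≤ ∑ w, ∑ i, (F w i i).re * |hA.eigenvalues i| := by
        gcongr with w
        refine (abs_sum_le_sum_abs _ _).trans_eq (sum_congr rfl fun i _ => ?_)
        rw [abs_mul, abs_of_nonneg (hF w i)]
    _ = ∑ i, |hA.eigenvalues i| := by
        rw [sum_comm]
        simp [← sum_mul, hF1]

theorem sum_abs_re_trace_mul_le_sqrt_card_mul_sqrt (hE : ∀ w, (E w).PosSemidef)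
    (hE1 : ∑ w, E w = 1) {A : Matrix n n ℂ} (hA : A.IsHermitian) :
    ∑ w, |(E w * A).trace.re| ≤ √(Fintype.card n) * √((A * A).trace.re) :=
  calc ∑ w, |(E w * A).trace.re| ≤ ∑ i, 1 * |hA.eigenvalues i| := by
        simpa using sum_abs_re_trace_mul_le_sum_abs_eigenvalues hE hE1 hA
    _ ≤ _ := by
        simpa [hA.re_trace_mul_self] using
          Real.sum_mul_le_sqrt_mul_sqrt univ (fun _ => 1) fun i => |hA.eigenvalues i|

end Matrix

lemma mul_abs_div_sub_le (S x c : ℝ) : S * |x / S - c| ≤ |x - c * S| := by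
  rcases lt_trichotomy S 0 with hS | rfl | hS
  · exact (mul_nonpos_of_nonpos_of_nonneg hS.le (abs_nonneg _)).trans (abs_nonneg _)
  · simp
  · rw [← abs_of_pos hS, ← abs_mul, abs_of_pos hS, mul_sub, mul_div_cancel₀ _ hS.ne', mul_comm]

lemma dCond_le_half_sum_abs_sub {W : Type*} [Fintype W] (P : W → Bool → ℝ) :
    dCond P ≤ 1 / 2 * ∑ w, |P w true - P w false| := by
  rw [dCond, mul_sum]
  refine sum_le_sum fun w _ => ?_
  simp only [distUnif, Fintype.sum_bool, Fintype.card_bool]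
  set t := P w true
  set f := P w false
  have ht := mul_abs_div_sub_le (t + f) t (1 / 2)
  have hf := mul_abs_div_sub_le (t + f) f (1 / 2)
  rw [show t - 1 / 2 * (t + f) = (t - f) / 2 by ring] at ht
  rw [show f - 1 / 2 * (t + f) = -((t - f) / 2) by ring, abs_neg] at hf
  rw [abs_div, abs_two] at ht hf
  push_cast
  linarith

def boolSign (b : Bool) : ℝ := if b then 1 else -1

lemma boolSign_mul_boolSign (a b : Bool) :
    boolSign a * boolSign b = 2 * (if a = b then 1 else 0) - 1 := by
  cases a <;> cases b <;> norm_num [boolSign]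

lemma sum_mul_boolSign_mul_boolSign {α : Type*} [Fintype α] {p : α → ℝ} (hp : ∑ a, p a = 1)
    (g h : α → Bool) :
    ∑ a, p a * (boolSign (g a) * boolSign (h a)) = 2 * ∑ a with g a = h a, p a - 1 := by
  simp only [boolSign_mul_boolSign, mul_sub, mul_one, sum_sub_distrib, hp, sum_filter, mul_sum]
  congr 1
  refine sum_congr rfl fun a _ => ?_
  split_ifs <;> ring

section SignedEnsemble

variable {n 𝒳 : Type*} [Fintype 𝒳]

noncomputable def signedEnsemble (PX : 𝒳 → ℝ) (ρ : 𝒳 → Matrix n n ℂ) (f : 𝒳 → Bool) :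
    Matrix n n ℂ :=
  ∑ x, (PX x * boolSign (f x)) • ρ x

variable {PX : 𝒳 → ℝ} {ρ : 𝒳 → Matrix n n ℂ}

lemma isHermitian_signedEnsemble (hρ : ∀ x, (ρ x).IsHermitian) (f : 𝒳 → Bool) :
    (signedEnsemble PX ρ f).IsHermitian :=
  isSelfAdjoint_sum univ fun x _ => (hρ x).smul (IsSelfAdjoint.all _)

lemma re_trace_mul_signedEnsemble [Fintype n] (E : Matrix n n ℂ) (f : 𝒳 → Bool) :
    (E * signedEnsemble PX ρ f).trace.re =
      ∑ x with f x = true, PX x * (E * ρ x).trace.re -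
        ∑ x with f x = false, PX x * (E * ρ x).trace.re := by
  simp only [signedEnsemble, Matrix.mul_sum, Matrix.trace_sum, Matrix.mul_smul,
    Matrix.trace_smul, Complex.re_sum, Complex.smul_re, sum_filter, ← sum_sub_distrib]
  refine sum_congr rfl fun x _ => ?_
  cases f x <;> simp [boolSign]

lemma re_trace_signedEnsemble_mul_self [Fintype n] (f : 𝒳 → Bool) :
    (signedEnsemble PX ρ f * signedEnsemble PX ρ f).trace.re =
      ∑ x, ∑ x', PX x * PX x' * (boolSign (f x) * boolSign (f x')) * (ρ x * ρ x').trace.re := by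
  simp only [signedEnsemble, sum_mul_sum, Matrix.trace_sum, Matrix.smul_mul, Matrix.mul_smul,
    Matrix.trace_smul, Complex.re_sum, Complex.smul_re, smul_eq_mul]
  refine sum_congr rfl fun x _ => sum_congr rfl fun x' _ => ?_
  ring

lemma sum_mul_re_trace_signedEnsemble_mul_self [Fintype n] [DecidableEq 𝒳] {PF : (𝒳 → Bool) → ℝ}
    (hPF1 : ∑ f, PF f = 1) :
    ∑ f, PF f * (signedEnsemble PX ρ f * signedEnsemble PX ρ f).trace.re =
      ∑ x, ∑ x', PX x * PX x' * (2 * (∑ f with f x = f x', PF f) - 1) *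
        (ρ x * ρ x').trace.re := by
  have hbias x x' : 2 * (∑ f with f x = f x', PF f) - 1 =
      ∑ f, PF f * (boolSign (f x) * boolSign (f x')) :=
    (sum_mul_boolSign_mul_boolSign hPF1 (· x) (· x')).symm
  simp only [hbias]
  simp only [re_trace_signedEnsemble_mul_self, mul_sum, sum_mul]
  rw [sum_comm]
  refine sum_congr rfl fun x _ => ?_
  rw [sum_comm]
  exact sum_congr rfl fun x' _ => sum_congr rfl fun f _ => by ring

end SignedEnsemble

lemma dQuant_le_half_sqrt_mul_sqrt {d : ℕ} {𝒳 : Type} [Fintype 𝒳] {PX : 𝒳 → ℝ}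
    {ρ : 𝒳 → Matrix (Fin d) (Fin d) ℂ} (hρ : ∀ x, (ρ x).IsHermitian) (f : 𝒳 → Bool) :
    dQuant PX ρ f ≤
      1 / 2 * √d * √((signedEnsemble PX ρ f * signedEnsemble PX ρ f).trace.re) := by
  refine Real.sSup_le (fun r ⟨M, hr⟩ => ?_) (by positivity)
  calc r ≤ 1 / 2 * ∑ w, |(M.E w * signedEnsemble PX ρ f).trace.re| := by
        simpa only [hr, re_trace_mul_signedEnsemble] using dCond_le_half_sum_abs_sub _
    _ ≤ _ := by
        rw [mul_assoc]
        gcongr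
        simpa using Matrix.sum_abs_re_trace_mul_le_sqrt_card_mul_sqrt M.psd M.sum_eq
          (isHermitian_signedEnsemble hρ f)

theorem thm_mainschur_general {d : ℕ} {𝒳 : Type} [Fintype 𝒳] [DecidableEq 𝒳]
    (PX : 𝒳 → ℝ)
    (PF : (𝒳 → Bool) → ℝ) (hPF0 : ∀ f, 0 ≤ PF f) (hPF1 : ∑ f, PF f = 1)
    (ρ : 𝒳 → Matrix (Fin d) (Fin d) ℂ)
    (hρ : ∀ x, (ρ x).PosSemidef) :
    ∑ f, PF f * dQuant PX ρ f
      ≤ (1 / 2) * Real.sqrt d *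
          Real.sqrt (∑ x, ∑ x', PX x * PX x' *
            (2 * (∑ f ∈ univ.filter (fun f => f x = f x'), PF f) - 1) *
            ((ρ x * ρ x').trace.re)) := by
  have hHerm x := (hρ x).isHermitian
  set T := fun f => (signedEnsemble PX ρ f * signedEnsemble PX ρ f).trace.re
  have hT : ∀ f, 0 ≤ T f := fun f => by
    simp only [T, (isHermitian_signedEnsemble hHerm f).re_trace_mul_self]
    positivity
  calc ∑ f, PF f * dQuant PX ρ f ≤ ∑ f, PF f * (1 / 2 * √d * √(T f)) := by
        gcongr with f
        · exact hPF0 f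
        · exact dQuant_le_half_sqrt_mul_sqrt hHerm f
    _ = 1 / 2 * √d * ∑ f, PF f • √(T f) := by
        simp only [mul_sum, smul_eq_mul]
        exact sum_congr rfl fun f _ => by ring
    _ ≤ 1 / 2 * √d * √(∑ f, PF f • T f) := by
        gcongr
        exact Real.strictConcaveOn_sqrt.concaveOn.le_map_sum (fun f _ => hPF0 f) hPF1
          fun f _ => hT f
    _ = _ := by
        simp only [smul_eq_mul, T, sum_mul_re_trace_signedEnsemble_mul_self hPF1]

/-- **Theorem `thm:mainschur`**: for a random variable `X` with distribution `PX` on a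
finite set `𝒳`, a random predicate `F` (distribution `PF` on functions `𝒳 → {0,1}`,
independent of `X`), and a family `{ρ_x}` of density matrices on `ℂ^d`, setting
`λ_{x,x'} := 2·Pr_f[f(x) = f(x')] - 1`,
`d(F(X)|⟨ρ_X,F⟩) ≤ (1/2)·√d·√(∑_{x,x'} P_X(x)·P_X(x')·λ_{x,x'}·tr(ρ_x ρ_{x'}))`. -/
theorem thm_mainschur {d : ℕ} {𝒳 : Type} [Fintype 𝒳] [DecidableEq 𝒳]
    (PX : 𝒳 → ℝ) (hPX0 : ∀ x, 0 ≤ PX x) (hPX1 : ∑ x, PX x = 1)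
    (PF : (𝒳 → Bool) → ℝ) (hPF0 : ∀ f, 0 ≤ PF f) (hPF1 : ∑ f, PF f = 1)
    (ρ : 𝒳 → Matrix (Fin d) (Fin d) ℂ)
    (hρ : ∀ x, (ρ x).PosSemidef) (hρt : ∀ x, (ρ x).trace = 1) :
    ∑ f, PF f * dQuant PX ρ f
      ≤ (1 / 2) * Real.sqrt d *
          Real.sqrt (∑ x, ∑ x', PX x * PX x' *
            (2 * (∑ f ∈ univ.filter (fun f => f x = f x'), PF f) - 1) *
            ((ρ x * ρ x').trace.re)) :=
  thm_mainschur_general PX PF hPF0 hPF1 ρ hρ
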